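/- Let l ≥ 1 be an integer, and for i = 1,…,l let ε_i ∈ [0,1) and z_i ∈ (0,1). Set z* = max_{i} z_i and d_max = ⌈1/(1−z*)⌉ − 1. Suppose t > 0 and (p_j)_{j≥1} is a nonnegative summable sequence with Σ_{j≥1} p_j = 1 such that for every i and every x ∈ [0, z_i], t·(1−ε_i)·(Σ_{j≥1} j p_j x^{j−1}) + ln(1−x) > 0. Define (p̄_j)_{j≥1} by p̄_j = p_j for 1 ≤ j ≤ d_max−1, p̄_{d_max} = Σ_{j≥d_max} p_j, and p̄_j = 0 for j > d_max. Then (p̄_j) is nonnegative with Σ_{j≥1} p̄_j = 1, and for every i and every x ∈ [0, z_i], t·(1−ε_i)·(Σ_{j=1}^{d_max} j p̄_j x^{j−1}) + ln(1−x) > 0. -/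

import Mathlib

/-!
Write `d = d_max`. The choice of `d` gives `z* (d + 1) ≤ d`, so for `0 ≤ x ≤ z*` the
coefficients `j x^(j-1)` of `P'(x)` are nonincreasing for `j ≥ d`. Moving the whole tail mass
`∑_{j ≥ d} p_j` onto degree `d` therefore can only increase `P'(x)` on `[0, z*]`, and
feasibility is preserved.
-/

open Finset

theorem two_le_natCeil_one_div_one_sub {z : ℝ} (hz0 : 0 < z) (hz1 : z < 1) :
    2 ≤ ⌈1 / (1 - z)⌉₊ :=
  Nat.lt_ceil.mpr <| by
    rw [Nat.cast_one, lt_one_div one_pos (by linarith), div_one]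
    linarith

theorem mul_succ_le_of_succ_eq_natCeil {z : ℝ} {d : ℕ} (hz : z < 1)
    (hd : d + 1 = ⌈1 / (1 - z)⌉₊) : z * (d + 1) ≤ d := by
  have h : 1 / (1 - z) ≤ d + 1 := by exact_mod_cast hd ▸ Nat.le_ceil _
  rw [div_le_iff₀ (by linarith)] at h
  linarith

theorem antitoneOn_natCast_mul_pow_pred {x : ℝ} {d : ℕ} (hd : 1 ≤ d) (hx0 : 0 ≤ x)
    (hx : x * (d + 1) ≤ d) : AntitoneOn (fun j : ℕ => (j : ℝ) * x ^ (j - 1)) (Set.Ici d) := by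
  refine antitoneOn_nat_Ici_of_succ_le fun j hj => ?_
  have hdj : (d : ℝ) ≤ j := by exact_mod_cast hj
  have hxj : x * (j + 1) ≤ j := by nlinarith
  obtain ⟨i, rfl⟩ : ∃ i, j = i + 1 := ⟨j - 1, by omega⟩
  simp only [add_tsub_cancel_right, pow_succ]
  push_cast at hxj ⊢
  nlinarith [pow_nonneg hx0 i]

theorem tsum_mul_le_sum_add_mul_tsum_nat_add {a p : ℕ → ℝ} {d : ℕ} (ha : ∀ j, 0 ≤ a j)
    (hp : ∀ j, 0 ≤ p j) (hs : Summable p) (had : AntitoneOn a (Set.Ici d)) :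
    ∑' j, a j * p j ≤ ∑ j ∈ range d, a j * p j + a d * ∑' k, p (k + d) := by
  have htail : Summable fun k => p (k + d) := (summable_nat_add_iff d).mpr hs
  have hle : ∀ k, a (k + d) * p (k + d) ≤ a d * p (k + d) := fun k =>
    mul_le_mul_of_nonneg_right (had Set.self_mem_Ici (by simp) (by omega)) (hp _)
  have hsum : Summable fun k => a (k + d) * p (k + d) :=
    (htail.mul_left (a d)).of_nonneg_of_le (fun k => mul_nonneg (ha _) (hp _)) hle
  rw [← ((summable_nat_add_iff d).mp hsum).sum_add_tsum_nat_add d, ← tsum_mul_left]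
  exact add_le_add_right (hsum.tsum_le_tsum hle (htail.mul_left _)) _

structure IsTruncationAt (p : ℕ → ℝ) (d : ℕ) (q : ℕ → ℝ) : Prop where
  eq_of_lt : ∀ j < d, q j = p j
  eq_tsum : q d = ∑' k, p (k + d)
  eq_zero_of_lt : ∀ j, d < j → q j = 0

namespace IsTruncationAt

variable {p q : ℕ → ℝ} {d : ℕ}

theorem nonneg (hq : IsTruncationAt p d q) (hp : ∀ j, 0 ≤ p j) (j : ℕ) : 0 ≤ q j := by
  rcases lt_trichotomy j d with h | rfl | h
  · exact hq.eq_of_lt j h ▸ hp j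
  · exact hq.eq_tsum ▸ tsum_nonneg fun k => hp _
  · exact (hq.eq_zero_of_lt j h).ge

theorem sum_range_succ_mul (hq : IsTruncationAt p d q) (a : ℕ → ℝ) :
    ∑ j ∈ range (d + 1), a j * q j =
      ∑ j ∈ range d, a j * p j + a d * ∑' k, p (k + d) := by
  rw [sum_range_succ, hq.eq_tsum]
  congr 1
  exact sum_congr rfl fun j hj => by rw [hq.eq_of_lt j (mem_range.mp hj)]

theorem tsum_eq (hq : IsTruncationAt p d q) (hs : Summable p) : ∑' j, q j = ∑' j, p j := by
  rw [tsum_eq_sum (s := range (d + 1)) fun j hj => hq.eq_zero_of_lt j (by simpa using hj)]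
  simpa [hs.sum_add_tsum_nat_add] using hq.sum_range_succ_mul 1

end IsTruncationAt

theorem sum_Icc_one_eq_sum_range_succ {M : Type*} [AddCommMonoid M] {f : ℕ → M} (hf : f 0 = 0)
    (d : ℕ) : ∑ j ∈ Icc 1 d, f j = ∑ j ∈ range (d + 1), f j :=
  sum_subset (fun j hj => by simp at hj ⊢; omega) fun j hj hj' => by
    obtain rfl : j = 0 := by simp at hj hj'; omega
    exact hf

theorem tsum_ite_le_eq_tsum_nat_add {p : ℕ → ℝ} (d : ℕ) (hs : Summable p) :
    ∑' j, (if d ≤ j then p j else 0) = ∑' k, p (k + d) := by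
  have hs' : Summable fun j => if d ≤ j then p j else 0 :=
    ((summable_nat_add_iff d).mpr hs).congr (fun k => by simp) |> (summable_nat_add_iff d).mp
  rw [← hs'.sum_add_tsum_nat_add d, sum_eq_zero fun j hj => if_neg (by simpa using hj), zero_add]
  exact tsum_congr fun k => if_pos (by omega)

/-- Any feasible LT degree distribution for the heterogeneous broadcast
optimization problem can be truncated at degree `d_max = ⌈1/(1 - max_i z_i)⌉ - 1`
while remaining a degree distribution and remaining feasible. -/
theorem lt_truncated_distribution_feasible
    (l : ℕ) (hl : 1 ≤ l) (ε z : Fin l → ℝ)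
    (hε : ∀ i, ε i ∈ Set.Ico (0 : ℝ) 1) (hz : ∀ i, z i ∈ Set.Ioo (0 : ℝ) 1)
    (zstar : ℝ)
    (hzstar : zstar = Finset.univ.sup' (Finset.univ_nonempty_iff.mpr ⟨⟨0, hl⟩⟩) z)
    (dmax : ℕ) (hdmax : dmax = ⌈1 / (1 - zstar)⌉₊ - 1)
    (t : ℝ) (ht : 0 < t)
    (p : ℕ → ℝ) (hp0 : p 0 = 0) (hp : ∀ j, 0 ≤ p j) (hsum : Summable p)
    (htot : ∑' j, p j = 1)
    (hfeas : ∀ i, ∀ x : ℝ, 0 ≤ x → x ≤ z i →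
      0 < t * (1 - ε i) * (∑' j : ℕ, (j : ℝ) * p j * x ^ (j - 1)) + Real.log (1 - x))
    (pbar : ℕ → ℝ) (hbar0 : pbar 0 = 0)
    (hbar_lt : ∀ j, 1 ≤ j → j ≤ dmax - 1 → pbar j = p j)
    (hbar_d : pbar dmax = ∑' j : ℕ, if dmax ≤ j then p j else 0)
    (hbar_gt : ∀ j, dmax < j → pbar j = 0) :
    (∀ j, 0 ≤ pbar j) ∧ (∑' j, pbar j = 1) ∧
      ∀ i, ∀ x : ℝ, 0 ≤ x → x ≤ z i →
        0 < t * (1 - ε i) * (∑ j ∈ Finset.Icc 1 dmax, (j : ℝ) * pbar j * x ^ (j - 1)) +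
            Real.log (1 - x) := by
  have hz_le (i) : z i ≤ zstar := hzstar ▸ le_sup' z (mem_univ i)
  have hzstar1 : zstar < 1 := hzstar ▸ (sup'_lt_iff _).mpr fun i _ => (hz i).2
  have hd1 : 1 ≤ dmax := by
    have := two_le_natCeil_one_div_one_sub ((hz ⟨0, hl⟩).1.trans_le (hz_le _)) hzstar1
    omega
  have hdz : zstar * (dmax + 1) ≤ dmax :=
    mul_succ_le_of_succ_eq_natCeil hzstar1 (by omega)
  have htrunc : IsTruncationAt p dmax pbar := by
    refine ⟨fun j hj => ?_, hbar_d.trans (tsum_ite_le_eq_tsum_nat_add dmax hsum), hbar_gt⟩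
    rcases j.eq_zero_or_pos with rfl | hj0
    · rw [hbar0, hp0]
    · exact hbar_lt j hj0 (by omega)
  refine ⟨htrunc.nonneg hp, (htrunc.tsum_eq hsum).trans htot, fun i x hx0 hx => ?_⟩
  have hxd : x * (dmax + 1) ≤ dmax := by nlinarith [hz_le i]
  have hbound := tsum_mul_le_sum_add_mul_tsum_nat_add (fun j => by positivity) hp hsum
    (antitoneOn_natCast_mul_pow_pred hd1 hx0 hxd)
  have hIcc : ∑ j ∈ Icc 1 dmax, (j : ℝ) * pbar j * x ^ (j - 1)
      = ∑ j ∈ range (dmax + 1), (j : ℝ) * x ^ (j - 1) * pbar j := by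
    rw [sum_Icc_one_eq_sum_range_succ (by simp)]
    exact sum_congr rfl fun j _ => mul_right_comm ..
  have hc : 0 ≤ t * (1 - ε i) := mul_nonneg ht.le (by linarith [(hε i).2])
  calc 0 < t * (1 - ε i) * (∑' j : ℕ, (j : ℝ) * x ^ (j - 1) * p j) + Real.log (1 - x) := by
        simpa only [mul_right_comm _ (p _)] using hfeas i x hx0 hx
    _ ≤ _ := by
      rw [hIcc, htrunc.sum_range_succ_mul]
      exact add_le_add_left (mul_le_mul_of_nonneg_left hbound hc) _
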